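/- arXiv:2101.12627 — 11 statements merged into one kernel-verified Lean document; each statement's English description precedes it below -/
import Mathlib

section
/- Let ξ = (x₀,y₀,1), ν₁ = (x₁,y₁,1), ν₂ = (x₂,y₂,1) be linearly independent vectors in ℝ³ with x₀ > y₀ > 1, with x₁ < 0 or y₁ < 0, and with x₂ < 0 or y₂ < 0. Then the area of the triangle with vertices ξ, ν₁, ν₂ is strictly greater than (1/4)·√(sinSqAngle(ξ, ν₁, ν₂)), and the volume of the tetrahedron with vertices 0, ξ, ν₁, ν₂ is strictly greater than (1/12)·√(sinSqAngle(ξ, ν₁, ν₂)). -/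
noncomputable section

/-- Cross product on `ℝ³`. -/
def cross3 (u v : Fin 3 → ℝ) : Fin 3 → ℝ :=
  ![u 1 * v 2 - u 2 * v 1, u 2 * v 0 - u 0 * v 2, u 0 * v 1 - u 1 * v 0]

/-- Squared Euclidean norm on `ℝ³`. -/
def normSq3 (v : Fin 3 → ℝ) : ℝ := v 0 ^ 2 + v 1 ^ 2 + v 2 ^ 2

/-- Squared sine of the angle between the plane spanned by `u, v` and the plane
spanned by `u, w`. -/
def sinSqAngle (u v w : Fin 3 → ℝ) : ℝ :=
  normSq3 (cross3 (cross3 u v) (cross3 u w)) /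
    (normSq3 (cross3 u v) * normSq3 (cross3 u w))

/-- Area of the triangle with vertices `A`, `B`, `C` in `ℝ³`. -/
def triangleArea (A B C : Fin 3 → ℝ) : ℝ :=
  (1 / 2) * Real.sqrt (normSq3 (cross3 (B - A) (C - A)))

/-- Volume of the tetrahedron with vertices `O`, `A`, `B`, `C` in `ℝ³`. -/
def tetraVolume (O A B C : Fin 3 → ℝ) : ℝ :=
  (1 / 6) * |Matrix.det (Matrix.of ![A - O, B - O, C - O])|


/-! With `D = det (ξ, ν₁, ν₂)`, the identity `(ξ × ν₁) × (ξ × ν₂) = D • ξ` gives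
`sinSqAngle ξ ν₁ ν₂ = D² ‖ξ‖² / (‖ξ × ν₁‖² ‖ξ × ν₂‖²)`. A coordinate in which `ξ` dominates its
last entry while `νₖ` is negative keeps `νₖ` at distance more than `1/√2` from the line `ℝ ξ`,
i.e. `‖ξ × νₖ‖² > ‖ξ‖² / 2`, hence `sinSqAngle < 4 D² / ‖ξ‖²`. Since
`D = ξ ⬝ ((ν₁ - ξ) × (ν₂ - ξ))`, Cauchy–Schwarz bounds `D² / ‖ξ‖²` by
`‖(ν₁ - ξ) × (ν₂ - ξ)‖² = 4 area²`, and `‖ξ‖ ≥ 1` bounds it by `D² = 36 volume²`. -/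

open Matrix

lemma cross3_eq_crossProduct (u v : Fin 3 → ℝ) : cross3 u v = u ⨯₃ v := rfl

lemma normSq3_eq_dotProduct (v : Fin 3 → ℝ) : normSq3 v = v ⬝ᵥ v := by
  simp only [normSq3, vec3_dotProduct]; ring

lemma normSq3_nonneg (v : Fin 3 → ℝ) : 0 ≤ normSq3 v := by
  unfold normSq3; positivity

lemma normSq3_cross3 (u v : Fin 3 → ℝ) :
    normSq3 (cross3 u v) = normSq3 u * normSq3 v - (u ⬝ᵥ v) ^ 2 := by
  simp only [normSq3_eq_dotProduct, cross3_eq_crossProduct, cross_dot_cross, dotProduct_comm v u]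
  ring

lemma dotProduct_sq_le_normSq3_mul (u v : Fin 3 → ℝ) :
    (u ⬝ᵥ v) ^ 2 ≤ normSq3 u * normSq3 v := by
  linarith [normSq3_cross3 u v, normSq3_nonneg (cross3 u v)]

lemma cross3_cross3_cross3 (u v w : Fin 3 → ℝ) :
    cross3 (cross3 u v) (cross3 u w) = (of ![u, v, w]).det • u := by
  have hvuw : v ⬝ᵥ u ⨯₃ w = -(of ![u, v, w]).det := by
    rw [triple_product_permutation, ← cross_anticomm, dotProduct_neg, triple_product_eq_det]
    rfl
  simp only [cross3_eq_crossProduct]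
  rw [cross_cross_eq_smul_sub_smul, dot_self_cross, hvuw, zero_smul, zero_sub, neg_smul, neg_neg]

lemma normSq3_smul (c : ℝ) (v : Fin 3 → ℝ) : normSq3 (c • v) = c ^ 2 * normSq3 v := by
  simp only [normSq3, Pi.smul_apply, smul_eq_mul]; ring

lemma det_eq_dotProduct_cross3_sub (u v w : Fin 3 → ℝ) :
    (of ![u, v, w]).det = u ⬝ᵥ cross3 (v - u) (w - u) := by
  simp only [cross3_eq_crossProduct, map_sub, LinearMap.sub_apply, cross_self, dotProduct_sub,
    dot_self_cross, dot_cross_self, sub_zero, triple_product_eq_det]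
  rfl

lemma det_sq_le_normSq3_mul_normSq3_cross3 (u v w : Fin 3 → ℝ) :
    (of ![u, v, w]).det ^ 2 ≤ normSq3 u * normSq3 (cross3 (v - u) (w - u)) := by
  rw [det_eq_dotProduct_cross3_sub]; exact dotProduct_sq_le_normSq3_mul _ _

lemma normSq3_cross3_eq_mul_normSq3_sub_smul (u v : Fin 3 → ℝ) (hu : normSq3 u ≠ 0) :
    normSq3 (cross3 u v) = normSq3 u * normSq3 (v - ((u ⬝ᵥ v) / normSq3 u) • u) := by
  set p := v - ((u ⬝ᵥ v) / normSq3 u) • u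
  have hdot : u ⬝ᵥ p = 0 := by
    rw [dotProduct_sub, dotProduct_smul, ← normSq3_eq_dotProduct, smul_eq_mul,
      div_mul_cancel₀ _ hu, sub_self]
  have hcross : cross3 u p = cross3 u v := by
    simp only [p, cross3_eq_crossProduct, map_sub, map_smul, cross_self, smul_zero, sub_zero]
  rw [← hcross, normSq3_cross3, hdot]
  ring

lemma sq_add_sq_le_normSq3 (v : Fin 3 → ℝ) {i : Fin 3} (hi : i ≠ 2) :
    v i ^ 2 + v 2 ^ 2 ≤ normSq3 v := by
  unfold normSq3
  fin_cases i
  · simp only [Fin.zero_eta, Fin.isValue]; nlinarith [sq_nonneg (v 1)]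
  · simp only [Fin.mk_one, Fin.isValue]; nlinarith [sq_nonneg (v 0)]
  · exact absurd rfl hi

section SeparatedByCoordinate

variable {u v : Fin 3 → ℝ} {i : Fin 3} (hi : i ≠ 2) (hu : 0 ≤ u 2) (hui : u 2 < u i)
  (hv : v 2 = 1) (hvi : v i < 0)
include hi hu hui hv hvi

lemma half_lt_normSq3_sub_smul (t : ℝ) : 1 / 2 < normSq3 (v - t • u) := by
  have hle := sq_add_sq_le_normSq3 (v - t • u) hi
  simp only [Pi.sub_apply, Pi.smul_apply, smul_eq_mul, hv] at hle
  rcases le_or_gt t 0 with ht | ht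
  · nlinarith [sq_nonneg (v i - t * u i), mul_nonneg (neg_nonneg.mpr ht) hu]
  · have : (t * u 2) ^ 2 < (v i - t * u i) ^ 2 := by
      nlinarith [mul_lt_mul_of_pos_left hui ht, mul_nonneg ht.le hu]
    nlinarith [sq_nonneg (2 * (t * u 2) - 1)]

lemma normSq3_div_two_lt_normSq3_cross3 : normSq3 u / 2 < normSq3 (cross3 u v) := by
  have hpos : 0 < normSq3 u := by
    nlinarith [sq_add_sq_le_normSq3 u hi, sq_nonneg (u 2)]
  rw [normSq3_cross3_eq_mul_normSq3_sub_smul u v hpos.ne']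
  nlinarith [half_lt_normSq3_sub_smul hi hu hui hv hvi ((u ⬝ᵥ v) / normSq3 u)]

end SeparatedByCoordinate

lemma sqrt_lt_two_mul_sqrt {s a : ℝ} (ha : 0 < a) (h : s < 4 * a) : √s < 2 * √a := by
  rw [Real.sqrt_lt' (by positivity), mul_pow, Real.sq_sqrt ha.le]; linarith

lemma sinSqAngle_lt (u v w : Fin 3 → ℝ) (hu : 0 < normSq3 u) (hdet : (of ![u, v, w]).det ≠ 0)
    (hv : normSq3 u / 2 < normSq3 (cross3 u v)) (hw : normSq3 u / 2 < normSq3 (cross3 u w)) :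
    sinSqAngle u v w < 4 * (of ![u, v, w]).det ^ 2 / normSq3 u := by
  have hprod : normSq3 u ^ 2 / 4 < normSq3 (cross3 u v) * normSq3 (cross3 u w) := by
    nlinarith
  rw [sinSqAngle, cross3_cross3_cross3, normSq3_smul, div_lt_div_iff₀ (by nlinarith) hu]
  nlinarith [pow_pos (abs_pos.mpr hdet) 2, sq_abs (of ![u, v, w]).det]

theorem stmt1 (x₀ y₀ x₁ y₁ x₂ y₂ : ℝ)
    (h01 : x₀ > y₀) (h02 : y₀ > 1)
    (h1 : x₁ < 0 ∨ y₁ < 0) (h2 : x₂ < 0 ∨ y₂ < 0)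
    (hLI : LinearIndependent ℝ ![![x₀, y₀, 1], ![x₁, y₁, 1], ![x₂, y₂, (1 : ℝ)]]) :
    triangleArea ![x₀, y₀, 1] ![x₁, y₁, 1] ![x₂, y₂, 1] >
      (1 / 4) * Real.sqrt (sinSqAngle ![x₀, y₀, 1] ![x₁, y₁, 1] ![x₂, y₂, 1]) ∧
    tetraVolume 0 ![x₀, y₀, 1] ![x₁, y₁, 1] ![x₂, y₂, 1] >
      (1 / 12) * Real.sqrt (sinSqAngle ![x₀, y₀, 1] ![x₁, y₁, 1] ![x₂, y₂, 1]) := by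
  set u : Fin 3 → ℝ := ![x₀, y₀, 1]
  set v : Fin 3 → ℝ := ![x₁, y₁, 1]
  set w : Fin 3 → ℝ := ![x₂, y₂, 1]
  set D := (of ![u, v, w]).det
  have hQ : 1 ≤ normSq3 u := by
    simp only [normSq3, u, cons_val_zero, cons_val_one, cons_val]; nlinarith
  have hD : D ≠ 0 :=
    ((isUnit_iff_isUnit_det _).mp (linearIndependent_rows_iff_isUnit.mp hLI)).ne_zero
  have separated : ∀ p : Fin 3 → ℝ, p 2 = 1 → p 0 < 0 ∨ p 1 < 0 →
      normSq3 u / 2 < normSq3 (cross3 u p) := by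
    rintro p hp (hp0 | hp1)
    · exact normSq3_div_two_lt_normSq3_cross3 (i := 0) (by decide) zero_le_one
        (by simp only [u, cons_val, cons_val_zero]; linarith) hp hp0
    · exact normSq3_div_two_lt_normSq3_cross3 (i := 1) (by decide) zero_le_one
        (by simp only [u, cons_val, cons_val_one]; linarith) hp hp1
  have hsin := sinSqAngle_lt u v w (by linarith) hD (separated v rfl h1) (separated w rfl h2)
  have hCS := det_sq_le_normSq3_mul_normSq3_cross3 u v w
  have hD2 : 0 < D ^ 2 := by positivity
  refine ⟨?_, ?_⟩
  · have hN : 0 < normSq3 (cross3 (v - u) (w - u)) := by nlinarith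
    have hs : sinSqAngle u v w < 4 * normSq3 (cross3 (v - u) (w - u)) :=
      hsin.trans_le <| (div_le_iff₀' (by linarith)).mpr (by linarith)
    rw [triangleArea, gt_iff_lt]
    linarith [sqrt_lt_two_mul_sqrt hN hs]
  · have hs : sinSqAngle u v w < 4 * D ^ 2 :=
      hsin.trans_le (div_le_self (by positivity) hQ)
    have := sqrt_lt_two_mul_sqrt hD2 hs
    rw [Real.sqrt_sq_eq_abs] at this
    rw [tetraVolume, sub_zero, sub_zero, sub_zero, gt_iff_lt]
    linarith
end
end

section
/- Let a, b, x₀, y₀ be real numbers with b > a and y₀ > 1, and set A = (a,0,1), B = (b,0,1), C = (x₀,y₀,1) in ℝ³. Then the area of the triangle ABC is strictly greater than (1/4)·√(sinSqAngle(C, A, B)), where sinSqAngle(C, A, B) is the squared sine of the angle between the plane through the origin spanned by A and C and the plane through the origin spanned by B and C. -/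
noncomputable section

theorem stmt2 (a b x₀ y₀ : ℝ) (hab : b > a) (hy : y₀ > 1) :
    triangleArea ![a, 0, 1] ![b, 0, 1] ![x₀, y₀, 1] >
      (1 / 4) * Real.sqrt (sinSqAngle ![x₀, y₀, 1] ![a, 0, 1] ![b, 0, 1]) := by
  set S : ℝ := x₀ ^ 2 + y₀ ^ 2 + 1 with hS
  set Na : ℝ := y₀ ^ 2 + (a - x₀) ^ 2 + a ^ 2 * y₀ ^ 2 with hNa
  set Nb : ℝ := y₀ ^ 2 + (b - x₀) ^ 2 + b ^ 2 * y₀ ^ 2 with hNb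
  have hy0 : (0:ℝ) < y₀ := by linarith
  have hba : (0:ℝ) < b - a := by linarith
  have hy2 : (0:ℝ) ≤ y₀ ^ 2 - 1 := by nlinarith
  have hS1 : (1:ℝ) < S := by nlinarith
  have hNap : 0 < Na := by positivity
  have hNbp : 0 < Nb := by positivity
  have harea : triangleArea ![a, 0, 1] ![b, 0, 1] ![x₀, y₀, 1] = (1/2) * ((b - a) * y₀) := by
    rw [triangleArea]
    have : normSq3 (cross3 (![b,0,1] - ![a,0,1]) (![x₀,y₀,1] - ![a,0,1]))
        = ((b - a) * y₀) ^ 2 := by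
      simp only [normSq3, cross3, Pi.sub_apply, Matrix.cons_val_zero, Matrix.cons_val_one,
        Matrix.head_cons, Matrix.cons_val_two, Matrix.tail_cons]
      ring
    rw [this, Real.sqrt_sq (by positivity)]
  have hsin : sinSqAngle ![x₀, y₀, 1] ![a, 0, 1] ![b, 0, 1]
      = (y₀ ^ 2 * (b - a) ^ 2 * S) / (Na * Nb) := by
    rw [sinSqAngle]
    have h1 : normSq3 (cross3 ![x₀,y₀,1] ![a,0,1]) = Na := by
      simp [normSq3, cross3]; ring
    have h2 : normSq3 (cross3 ![x₀,y₀,1] ![b,0,1]) = Nb := by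
      simp [normSq3, cross3]; ring
    have h3 : normSq3 (cross3 (cross3 ![x₀,y₀,1] ![a,0,1]) (cross3 ![x₀,y₀,1] ![b,0,1]))
        = y₀ ^ 2 * (b - a) ^ 2 * S := by
      simp [normSq3, cross3]; ring
    rw [h1, h2, h3]
  rw [harea, hsin]
  have k1 : S < 2 * Na := by
    nlinarith [sq_nonneg (2*a - x₀), mul_nonneg (sq_nonneg a) hy2]
  have k2 : S < 2 * Nb := by
    nlinarith [sq_nonneg (2*b - x₀), mul_nonneg (sq_nonneg b) hy2]
  have h4 : S < 4 * (Na * Nb) := by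
    nlinarith [mul_pos (by linarith : (0:ℝ) < 2*Na - S) (by linarith : (0:ℝ) < 2*Nb - S)]
  have hlt : (y₀ ^ 2 * (b - a) ^ 2 * S) / (Na * Nb) < (2 * ((b - a) * y₀)) ^ 2 := by
    rw [div_lt_iff₀ (by positivity)]
    have hp : (0:ℝ) < y₀ ^ 2 * (b - a) ^ 2 := by positivity
    nlinarith [mul_lt_mul_of_pos_left h4 hp]
  have hs : Real.sqrt ((y₀ ^ 2 * (b - a) ^ 2 * S) / (Na * Nb)) < 2 * ((b - a) * y₀) := by
    calc Real.sqrt ((y₀ ^ 2 * (b - a) ^ 2 * S) / (Na * Nb))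
        < Real.sqrt ((2 * ((b - a) * y₀)) ^ 2) := Real.sqrt_lt_sqrt (by positivity) hlt
      _ = 2 * ((b - a) * y₀) := Real.sqrt_sq (by positivity)
  linarith
end
end

section
/- Let a, b, x₀, y₀ be real numbers with b > a and x₀ > 1, and set A = (0,a,1), B = (0,b,1), C = (x₀,y₀,1) in ℝ³. Then the area of the triangle ABC is strictly greater than (1/4)·√(sinSqAngle(C, A, B)), where sinSqAngle(C, A, B) is the squared sine of the angle between the plane through the origin spanned by A and C and the plane through the origin spanned by B and C. -/
noncomputable section

lemma key_lemma (S P fa fb q : ℝ) (hS : 0 < S) (hP : 0 < P) (hq : 0 < q)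
    (hfa : 0 < fa) (hfb : 0 < fb)
    (ha : q * S ≤ P * fa) (hb : q * S ≤ P * fb)
    (hSx : P ≤ S) (hP4 : P < 4 * q^2) : S < 4 * (fa * fb) := by
  have hmul : (q * S) * (q * S) ≤ (P * fa) * (P * fb) :=
    mul_le_mul ha hb (by positivity) (by positivity)
  have A : P * S^2 < 4 * q^2 * S^2 := mul_lt_mul_of_pos_right hP4 (by positivity)
  have B : (S * P) * P ≤ (S * P) * S := mul_le_mul_of_nonneg_left hSx (by positivity)
  have t : S * P^2 < 4 * (fa * fb) * P^2 := by nlinarith [hmul, A, B]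
  exact (mul_lt_mul_iff_of_pos_right (by positivity : (0:ℝ) < P^2)).mp t

theorem stmt3 (a b x₀ y₀ : ℝ) (hab : b > a) (hx : x₀ > 1) :
    triangleArea ![0, a, 1] ![0, b, 1] ![x₀, y₀, 1] >
      (1 / 4) * Real.sqrt (sinSqAngle ![x₀, y₀, 1] ![0, a, 1] ![0, b, 1]) := by
  have hx0 : x₀ > 0 := by linarith
  have hba : b - a > 0 := by linarith
  -- area
  have harea : triangleArea ![0, a, 1] ![0, b, 1] ![x₀, y₀, 1] = (1/2) * ((b - a) * x₀) := by
    unfold triangleArea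
    congr 1
    have : normSq3 (cross3 (![0, b, 1] - ![0, a, 1]) (![x₀, y₀, 1] - ![0, a, 1]))
        = ((b - a) * x₀) ^ 2 := by
      simp [normSq3, cross3]
    rw [this, Real.sqrt_sq (by positivity)]
  -- denominators
  have h1 : normSq3 (cross3 ![x₀, y₀, 1] ![(0:ℝ), a, 1]) > 0 := by
    simp [normSq3, cross3]
    nlinarith [sq_nonneg (y₀ - a), sq_nonneg (a * x₀)]
  have h2 : normSq3 (cross3 ![x₀, y₀, 1] ![(0:ℝ), b, 1]) > 0 := by
    simp [normSq3, cross3]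
    nlinarith [sq_nonneg (y₀ - b), sq_nonneg (b * x₀)]
  -- key inequality: S < 4 f(a) f(b)
  have fa_pos : (0:ℝ) < (y₀ - a)^2 + x₀^2 * (1 + a^2) := by positivity
  have fb_pos : (0:ℝ) < (y₀ - b)^2 + x₀^2 * (1 + b^2) := by positivity
  have ha' : x₀^2 * (1 + x₀^2 + y₀^2) ≤ (1 + x₀^2) * ((y₀ - a)^2 + x₀^2 * (1 + a^2)) := by
    nlinarith [sq_nonneg (y₀ - a * (1 + x₀^2))]
  have hb' : x₀^2 * (1 + x₀^2 + y₀^2) ≤ (1 + x₀^2) * ((y₀ - b)^2 + x₀^2 * (1 + b^2)) := by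
    nlinarith [sq_nonneg (y₀ - b * (1 + x₀^2))]
  have hS : 1 + x₀^2 + y₀^2 < 4 * (((y₀ - a)^2 + x₀^2 * (1 + a^2)) * ((y₀ - b)^2 + x₀^2 * (1 + b^2))) := by
    refine key_lemma (1 + x₀^2 + y₀^2) (1 + x₀^2)
      ((y₀ - a)^2 + x₀^2 * (1 + a^2)) ((y₀ - b)^2 + x₀^2 * (1 + b^2)) (x₀^2)
      (by positivity) (by positivity) (by positivity) fa_pos fb_pos ha' hb'
      (by nlinarith [sq_nonneg y₀]) (by nlinarith [sq_nonneg (x₀^2 - 1)])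
  -- sin² < 4 (b-a)² x₀²
  have hsin : sinSqAngle ![x₀, y₀, 1] ![(0:ℝ), a, 1] ![(0:ℝ), b, 1] < (2 * ((b - a) * x₀))^2 := by
    rw [sinSqAngle, div_lt_iff₀ (by positivity)]
    have key : (1 + x₀^2 + y₀^2) * (x₀^2 * (b-a)^2)
        < 4 * (((y₀ - a)^2 + x₀^2 * (1 + a^2)) * ((y₀ - b)^2 + x₀^2 * (1 + b^2))) * (x₀^2 * (b-a)^2) :=
      mul_lt_mul_of_pos_right hS (by positivity)
    have e1 : normSq3 (cross3 (cross3 ![x₀, y₀, 1] ![(0:ℝ), a, 1]) (cross3 ![x₀, y₀, 1] ![(0:ℝ), b, 1]))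
        = (1 + x₀^2 + y₀^2) * (x₀^2 * (b-a)^2) := by
      simp [normSq3, cross3]; ring
    have e2 : normSq3 (cross3 ![x₀, y₀, 1] ![(0:ℝ), a, 1]) * normSq3 (cross3 ![x₀, y₀, 1] ![(0:ℝ), b, 1])
        = ((y₀ - a)^2 + x₀^2 * (1 + a^2)) * ((y₀ - b)^2 + x₀^2 * (1 + b^2)) := by
      simp [normSq3, cross3]; ring
    rw [e1, e2]
    calc (1 + x₀^2 + y₀^2) * (x₀^2 * (b-a)^2)
        < 4 * (((y₀ - a)^2 + x₀^2 * (1 + a^2)) * ((y₀ - b)^2 + x₀^2 * (1 + b^2))) * (x₀^2 * (b-a)^2) := key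
      _ = (2 * ((b - a) * x₀))^2 * (((y₀ - a)^2 + x₀^2 * (1 + a^2)) * ((y₀ - b)^2 + x₀^2 * (1 + b^2))) := by ring
  have hsqrt : Real.sqrt (sinSqAngle ![x₀, y₀, 1] ![(0:ℝ), a, 1] ![(0:ℝ), b, 1]) < 2 * ((b - a) * x₀) := by
    have hnn : 0 ≤ sinSqAngle ![x₀, y₀, 1] ![(0:ℝ), a, 1] ![(0:ℝ), b, 1] := by
      unfold sinSqAngle normSq3
      positivity
    have := Real.sqrt_lt_sqrt hnn hsin
    rwa [Real.sqrt_sq (by positivity)] at this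
  rw [harea]
  show (1:ℝ)/4 * _ < _
  linarith
end
end

section
/- Let v₁, v₂, v₃ ∈ ℝ² be three affinely independent points (the vertices of a nondegenerate triangle) and let M > 0 be a real number. Then the set of pairs (S, w), where S is a 2×2 integer matrix with determinant 1 or -1 and w ∈ ℤ², such that for each i ∈ {1,2,3} both coordinates of S·vᵢ + w have absolute value at most M, is finite. -/
open Matrix

theorem stmt6 (v₁ v₂ v₃ : Fin 2 → ℝ)
    (hAff : AffineIndependent ℝ ![v₁, v₂, v₃])
    (M : ℝ) (hM : 0 < M) :
    {Sw : Matrix (Fin 2) (Fin 2) ℤ × (Fin 2 → ℤ) |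
      (Sw.1.det = 1 ∨ Sw.1.det = -1) ∧
      ∀ v ∈ ({v₁, v₂, v₃} : Set (Fin 2 → ℝ)), ∀ j : Fin 2,
        |(Sw.1.map (Int.cast : ℤ → ℝ)).mulVec v j + (Sw.2 j : ℝ)| ≤ M}.Finite := by
  -- linear independence of the edge vectors
  have hli : LinearIndependent ℝ ![v₂ - v₁, v₃ - v₁] := by
    rw [LinearIndependent.pair_iff]
    intro s t hst
    have hcomb : ∑ e ∈ Finset.univ, (![-s - t, s, t] : Fin 3 → ℝ) e • (![v₁, v₂, v₃]) e = 0 := by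
      rw [Fin.sum_univ_three]
      simp only [Matrix.cons_val_zero, Matrix.cons_val_one, Matrix.head_cons,
        Matrix.cons_val_two, Matrix.tail_cons]
      have : (-s - t) • v₁ + s • v₂ + t • v₃ = s • (v₂ - v₁) + t • (v₃ - v₁) := by
        module
      rw [this, hst]
    have h0 := affineIndependent_iff.mp hAff Finset.univ ![-s - t, s, t]
      (by rw [Fin.sum_univ_three]; simp; ring) hcomb
    exact ⟨by simpa using h0 1 (Finset.mem_univ _), by simpa using h0 2 (Finset.mem_univ _)⟩
  -- a basis of ℝ² made of the edge vectors
  have hcard : Fintype.card (Fin 2) = Module.finrank ℝ (Fin 2 → ℝ) := by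
    simp [Module.finrank_fin_fun]
  let B : Module.Basis (Fin 2) ℝ (Fin 2 → ℝ) := basisOfLinearIndependentOfCardEqFinrank hli hcard
  have hB : ⇑B = ![v₂ - v₁, v₃ - v₁] := coe_basisOfLinearIndependentOfCardEqFinrank hli hcard
  -- coefficients expressing the standard basis vectors
  set c : Fin 2 → ℝ := fun k => B.repr (Pi.single k 1) 0 with hc
  set d : Fin 2 → ℝ := fun k => B.repr (Pi.single k 1) 1 with hd
  have hsingle : ∀ k : Fin 2, (Pi.single k 1 : Fin 2 → ℝ)
      = c k • (v₂ - v₁) + d k • (v₃ - v₁) := by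
    intro k
    have := B.sum_repr (Pi.single k 1)
    rw [Fin.sum_univ_two] at this
    rw [hB] at this
    simpa using this.symm
  set K : ℝ := (|c 0| + |d 0| + |c 1| + |d 1|) * (2 * M) with hK
  have hK0 : 0 ≤ K := by
    apply mul_nonneg
    · positivity
    · positivity
  set D : ℝ := M + K * (|v₁ 0| + |v₁ 1|) with hD
  -- finite boxes
  have hbox : ∀ C : ℝ, {x : ℤ | |(x : ℝ)| ≤ C}.Finite := by
    intro C
    apply (Set.finite_Icc (-⌈C⌉) ⌈C⌉).subset
    intro x hx
    simp only [Set.mem_setOf_eq] at hx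
    have h1 : |(x : ℝ)| ≤ (⌈C⌉ : ℝ) := hx.trans (Int.le_ceil C)
    have h2 : |x| ≤ ⌈C⌉ := by
      rw [← @Int.cast_le ℝ]
      push_cast
      exact h1
    rw [abs_le] at h2
    exact Set.mem_Icc.mpr h2
  have hmfin : {A : Matrix (Fin 2) (Fin 2) ℤ | ∀ i j, |(A i j : ℝ)| ≤ K}.Finite := by
    have h := Set.Finite.pi (fun _ : Fin 2 => Set.Finite.pi (fun _ : Fin 2 => hbox K))
    apply h.subset
    intro A hA
    rw [Set.mem_univ_pi]
    intro i
    rw [Set.mem_univ_pi]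
    intro j
    exact hA i j
  have hvfin : {w : Fin 2 → ℤ | ∀ j, |(w j : ℝ)| ≤ D}.Finite := by
    have h := Set.Finite.pi (fun _ : Fin 2 => hbox D)
    apply h.subset
    intro w hw
    rw [Set.mem_univ_pi]
    intro j
    exact hw j
  apply (hmfin.prod hvfin).subset
  rintro ⟨S, w⟩ ⟨-, hbd⟩
  have hb1 := hbd v₁ (by simp)
  have hb2 := hbd v₂ (by simp)
  have hb3 := hbd v₃ (by simp)
  set A : Matrix (Fin 2) (Fin 2) ℝ := S.map (Int.cast : ℤ → ℝ) with hA
  -- the images of the edge vectors are bounded by 2M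
  have hedge2 : ∀ j, |A.mulVec (v₂ - v₁) j| ≤ 2 * M := by
    intro j
    rw [Matrix.mulVec_sub]
    have : (A.mulVec v₂ - A.mulVec v₁) j
        = (A.mulVec v₂ j + (w j : ℝ)) - (A.mulVec v₁ j + (w j : ℝ)) := by
      simp only [Pi.sub_apply]; ring
    rw [this]
    calc |(A.mulVec v₂ j + (w j : ℝ)) - (A.mulVec v₁ j + (w j : ℝ))|
        ≤ |A.mulVec v₂ j + (w j : ℝ)| + |A.mulVec v₁ j + (w j : ℝ)| := abs_sub _ _
      _ ≤ M + M := add_le_add (hb2 j) (hb1 j)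
      _ = 2 * M := by ring
  have hedge3 : ∀ j, |A.mulVec (v₃ - v₁) j| ≤ 2 * M := by
    intro j
    rw [Matrix.mulVec_sub]
    have : (A.mulVec v₃ - A.mulVec v₁) j
        = (A.mulVec v₃ j + (w j : ℝ)) - (A.mulVec v₁ j + (w j : ℝ)) := by
      simp only [Pi.sub_apply]; ring
    rw [this]
    calc |(A.mulVec v₃ j + (w j : ℝ)) - (A.mulVec v₁ j + (w j : ℝ))|
        ≤ |A.mulVec v₃ j + (w j : ℝ)| + |A.mulVec v₁ j + (w j : ℝ)| := abs_sub _ _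
      _ ≤ M + M := add_le_add (hb3 j) (hb1 j)
      _ = 2 * M := by ring
  -- entries of S are bounded
  have hent : ∀ i j : Fin 2, |A i j| ≤ K := by
    intro i j
    have h1 : A i j = A.mulVec (Pi.single j 1) i := by
      rw [Matrix.mulVec_single]
      simp
    have h2 : A.mulVec (Pi.single j 1) i
        = c j * A.mulVec (v₂ - v₁) i + d j * A.mulVec (v₃ - v₁) i := by
      rw [hsingle j, Matrix.mulVec_add, Matrix.mulVec_smul, Matrix.mulVec_smul]
      simp only [Pi.add_apply, Pi.smul_apply, smul_eq_mul]
    rw [h1, h2]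
    calc |c j * A.mulVec (v₂ - v₁) i + d j * A.mulVec (v₃ - v₁) i|
        ≤ |c j| * |A.mulVec (v₂ - v₁) i| + |d j| * |A.mulVec (v₃ - v₁) i| := by
          refine (abs_add_le _ _).trans ?_
          rw [abs_mul, abs_mul]
      _ ≤ |c j| * (2 * M) + |d j| * (2 * M) := by
          gcongr <;> first | exact abs_nonneg _ | exact hedge2 i | exact hedge3 i
      _ ≤ K := by
          have h2M : (0:ℝ) ≤ 2 * M := by linarith
          rw [hK]
          have hj : j = 0 ∨ j = 1 := by omega
          rcases hj with rfl | rfl <;>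
            nlinarith [abs_nonneg (c 0), abs_nonneg (d 0), abs_nonneg (c 1), abs_nonneg (d 1)]
  -- w is bounded
  have hw : ∀ j : Fin 2, |(w j : ℝ)| ≤ D := by
    intro j
    have h1 : (w j : ℝ) = (A.mulVec v₁ j + (w j : ℝ)) - A.mulVec v₁ j := by ring
    have h2 : |A.mulVec v₁ j| ≤ K * (|v₁ 0| + |v₁ 1|) := by
      have : A.mulVec v₁ j = A j 0 * v₁ 0 + A j 1 * v₁ 1 := by
        simp [Matrix.mulVec, dotProduct, Fin.sum_univ_two]
      rw [this]
      calc |A j 0 * v₁ 0 + A j 1 * v₁ 1|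
          ≤ |A j 0| * |v₁ 0| + |A j 1| * |v₁ 1| := by
            refine (abs_add_le _ _).trans ?_
            rw [abs_mul, abs_mul]
        _ ≤ K * |v₁ 0| + K * |v₁ 1| := by
            gcongr <;> first | exact abs_nonneg _ | exact hent j 0 | exact hent j 1
        _ = K * (|v₁ 0| + |v₁ 1|) := by ring
    rw [h1]
    calc |(A.mulVec v₁ j + (w j : ℝ)) - A.mulVec v₁ j|
        ≤ |A.mulVec v₁ j + (w j : ℝ)| + |A.mulVec v₁ j| := abs_sub _ _
      _ ≤ M + K * (|v₁ 0| + |v₁ 1|) := add_le_add (hb1 j) h2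
      _ = D := hD.symm
  refine Set.mem_prod.mpr ⟨?_, ?_⟩
  · intro i j
    have := hent i j
    simpa [hA, Matrix.map_apply] using this
  · exact hw
end

section
/- Let A, B, C ∈ ℤ³ be linearly independent integer vectors, let P be the convex hull of {0, A, B, C} (an integer pyramid with vertex at the origin and triangular base), let K = {λ₁A + λ₂B + λ₃C : λ₁, λ₂, λ₃ ≥ 0} be the cone generated by P, and let d be a positive real number. Then the set of pairs (n, m), where n ∈ ℤ³ is primitive and m is an integer with 1 ≤ m ≤ d, such that the set {v ∈ K : ⟨n, v⟩ ≤ m} is bounded and contains P, and the set {v ∈ K : ⟨n, v⟩ > m} is nonempty, is finite. -/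
/-!
Send `(n, m)` to `(⟨n, A⟩, ⟨n, B⟩, ⟨n, C⟩, m)`; this is injective because `A, B, C` are
independent. If `⟨n, A⟩ ≤ 0`, the whole ray `ℝ≥0 • A` of `K` lies in the truncated cone, which
is then unbounded; so `⟨n, A⟩ ≥ 1` by integrality. Since `A ∈ P` lies in the truncated cone,
`⟨n, A⟩ ≤ m ≤ d`. Hence the image lies in the finite box `[1, ⌈d⌉]⁴`.
-/

open Matrix

lemma Bornology.IsBounded.exists_nonneg_smul_notMem {E : Type*} [NormedAddCommGroup E]
    [NormedSpace ℝ E] {S : Set E} (hS : Bornology.IsBounded S) {w : E} (hw : w ≠ 0) :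
    ∃ t : ℝ, 0 ≤ t ∧ t • w ∉ S := by
  obtain ⟨r, hr⟩ := isBounded_iff_forall_norm_le.mp hS
  have hw' : 0 < ‖w‖ := norm_pos_iff.mpr hw
  refine ⟨(|r| + 1) / ‖w‖, by positivity, fun hmem => ?_⟩
  have hnorm : ‖((|r| + 1) / ‖w‖) • w‖ = |r| + 1 := by
    rw [norm_smul, Real.norm_of_nonneg (by positivity), div_mul_cancel₀ _ hw'.ne']
  linarith [hr _ hmem, le_abs_self r]

lemma dotProduct_pos_of_isBounded_halfspace_inter {ι : Type*} [Fintype ι] {K : Set (ι → ℝ)}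
    {c w : ι → ℝ} {m : ℝ} (hm : 0 ≤ m) (hb : Bornology.IsBounded {v ∈ K | c ⬝ᵥ v ≤ m})
    (hw : w ≠ 0) (hray : ∀ t : ℝ, 0 ≤ t → t • w ∈ K) : 0 < c ⬝ᵥ w := by
  by_contra! hcw
  obtain ⟨t, ht, hnot⟩ := hb.exists_nonneg_smul_notMem hw
  refine hnot ⟨hray t ht, ?_⟩
  rw [dotProduct_smul, smul_eq_mul]
  nlinarith

lemma dotProduct_mem_Icc_of_isBounded_halfspace_inter {ι : Type*} [Fintype ι]
    {K : Set (ι → ℝ)} {n w : ι → ℤ} {m : ℤ} (hm : 0 ≤ m)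
    (hb : Bornology.IsBounded {v ∈ K | (fun i => (n i : ℝ)) ⬝ᵥ v ≤ m}) (hw : w ≠ 0)
    (hray : ∀ t : ℝ, 0 ≤ t → t • (fun i => (w i : ℝ)) ∈ K)
    (hle : (fun i => (n i : ℝ)) ⬝ᵥ (fun i => (w i : ℝ)) ≤ m) :
    w ⬝ᵥ n ∈ Set.Icc 1 m := by
  have hcast : ((w ⬝ᵥ n : ℤ) : ℝ) = (fun i => (n i : ℝ)) ⬝ᵥ (fun i => (w i : ℝ)) := by
    simp only [dotProduct, Int.cast_sum, Int.cast_mul, mul_comm]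
  have hw' : (fun i => (w i : ℝ)) ≠ 0 := fun h => hw (funext fun i => by simpa using congrFun h i)
  have hpos := dotProduct_pos_of_isBounded_halfspace_inter (by exact_mod_cast hm) hb hw' hray
  rw [← hcast] at hpos hle
  exact ⟨by exact_mod_cast hpos, by exact_mod_cast hle⟩

theorem stmt8_general (A B C : Fin 3 → ℤ)
    (hLI : LinearIndependent ℤ ![A, B, C])
    (d : ℝ) :
    let A' : Fin 3 → ℝ := fun i => (A i : ℝ)
    let B' : Fin 3 → ℝ := fun i => (B i : ℝ)
    let C' : Fin 3 → ℝ := fun i => (C i : ℝ)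
    let P : Set (Fin 3 → ℝ) := convexHull ℝ ({0, A', B', C'} : Set (Fin 3 → ℝ))
    let K : Set (Fin 3 → ℝ) :=
      {v | ∃ l₁ l₂ l₃ : ℝ, 0 ≤ l₁ ∧ 0 ≤ l₂ ∧ 0 ≤ l₃ ∧ v = l₁ • A' + l₂ • B' + l₃ • C'}
    {nm : (Fin 3 → ℤ) × ℤ |
      Int.gcd (Int.gcd (nm.1 0) (nm.1 1)) (nm.1 2) = 1 ∧
      1 ≤ nm.2 ∧ (nm.2 : ℝ) ≤ d ∧
      Bornology.IsBounded {v ∈ K | ∑ i, (nm.1 i : ℝ) * v i ≤ (nm.2 : ℝ)} ∧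
      P ⊆ {v ∈ K | ∑ i, (nm.1 i : ℝ) * v i ≤ (nm.2 : ℝ)} ∧
      {v ∈ K | (nm.2 : ℝ) < ∑ i, (nm.1 i : ℝ) * v i}.Nonempty}.Finite := by
  intro A' B' C' P K
  set M : Matrix (Fin 3) (Fin 3) ℤ := Matrix.of ![A, B, C]
  have hinj : Function.Injective (Prod.map M.mulVec (id : ℤ → ℤ)) :=
    (mulVec_injective_iff.mpr
      (Nonsingular.of_linearIndependent_row hLI).linearIndependent_col).prodMap
      Function.injective_id
  have hray : ∀ j, ∀ t : ℝ, 0 ≤ t → t • (fun i => (M j i : ℝ)) ∈ K := by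
    intro j t ht
    fin_cases j
    exacts [⟨t, 0, 0, ht, le_rfl, le_rfl, by simp [M, A']⟩,
      ⟨0, t, 0, le_rfl, ht, le_rfl, by simp [M, B']⟩,
      ⟨0, 0, t, le_rfl, le_rfl, ht, by simp [M, C']⟩]
  have hP : ∀ j, (fun i => (M j i : ℝ)) ∈ P := by
    intro j
    refine subset_convexHull ℝ _ ?_
    fin_cases j <;> simp [M, A', B', C']
  refine (((Set.finite_Icc 1 fun _ => ⌈d⌉).prod (Set.finite_Icc 1 ⌈d⌉)).preimage
    hinj.injOn).subset ?_
  rintro ⟨n, m⟩ ⟨-, hm, hmd, hb, hPsub, -⟩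
  have hmd' : m ≤ ⌈d⌉ := Int.cast_le.mp (hmd.trans (Int.le_ceil d))
  have hrow : ∀ j, (M *ᵥ n) j ∈ Set.Icc 1 m := fun j =>
    dotProduct_mem_Icc_of_isBounded_halfspace_inter (by omega) hb (hLI.ne_zero j) (hray j)
      (hPsub (hP j)).2
  exact ⟨⟨fun j => (hrow j).1, fun j => (hrow j).2.trans hmd'⟩, hm, hmd'⟩

theorem stmt8 (A B C : Fin 3 → ℤ)
    (hLI : LinearIndependent ℤ ![A, B, C])
    (d : ℝ) (hd : 0 < d) :
    let A' : Fin 3 → ℝ := fun i => (A i : ℝ)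
    let B' : Fin 3 → ℝ := fun i => (B i : ℝ)
    let C' : Fin 3 → ℝ := fun i => (C i : ℝ)
    let P : Set (Fin 3 → ℝ) := convexHull ℝ ({0, A', B', C'} : Set (Fin 3 → ℝ))
    let K : Set (Fin 3 → ℝ) :=
      {v | ∃ l₁ l₂ l₃ : ℝ, 0 ≤ l₁ ∧ 0 ≤ l₂ ∧ 0 ≤ l₃ ∧ v = l₁ • A' + l₂ • B' + l₃ • C'}
    {nm : (Fin 3 → ℤ) × ℤ |
      Int.gcd (Int.gcd (nm.1 0) (nm.1 1)) (nm.1 2) = 1 ∧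
      1 ≤ nm.2 ∧ (nm.2 : ℝ) ≤ d ∧
      Bornology.IsBounded {v ∈ K | ∑ i, (nm.1 i : ℝ) * v i ≤ (nm.2 : ℝ)} ∧
      P ⊆ {v ∈ K | ∑ i, (nm.1 i : ℝ) * v i ≤ (nm.2 : ℝ)} ∧
      {v ∈ K | (nm.2 : ℝ) < ∑ i, (nm.1 i : ℝ) * v i}.Nonempty}.Finite :=
  stmt8_general A B C hLI d
end

section
/- Let w₁, w₂, w₃ ∈ ℝ³ be linearly independent vectors, let K = {λ₁w₁ + λ₂w₂ + λ₃w₃ : λ₁, λ₂, λ₃ ≥ 0} be the simplicial cone they span, let v = α₁w₁ + α₂w₂ + α₃w₃ with α₁, α₂, α₃ > 0 be a point in the interior of K, and let d be a positive real number. Then the set of pairs (n, m), where n ∈ ℤ³ is primitive and m is an integer with 1 ≤ m < d, such that the set {u ∈ K : ⟨n, u⟩ ≤ m} is bounded and contains v, and the set {u ∈ K : ⟨n, u⟩ > m} is nonempty, is finite. -/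
/-! If the bounded part `{u ∈ K | ⟨n, u⟩ ≤ m}` contains `v`, it contains each ray `v + t wᵢ`
unless `⟨n, wᵢ⟩ > 0`. Then `∑ αᵢ ⟨n, wᵢ⟩ = ⟨n, v⟩ ≤ m < d` confines every `⟨n, wᵢ⟩` to
`(0, d / αᵢ)`, and since the `wᵢ` form a basis, `n` ranges over a bounded set of integer vectors. -/

open Bornology Matrix

theorem pos_of_isBounded_sublevel {E : Type*} [NormedAddCommGroup E] [NormedSpace ℝ E]
    (φ : Module.Dual ℝ E) {K : Set E} {v w : E} (hw : w ≠ 0)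
    (hray : ∀ t : ℝ, 0 ≤ t → v + t • w ∈ K) {m : ℝ}
    (hbdd : IsBounded {u ∈ K | φ u ≤ m}) (hv : φ v ≤ m) : 0 < φ w := by
  by_contra! hφw
  obtain ⟨C, hC⟩ := isBounded_iff_forall_norm_le.mp hbdd
  have hray_le : ∀ t : ℝ, 0 ≤ t → ‖v + t • w‖ ≤ C := fun t ht =>
    hC _ ⟨hray t ht, by rw [map_add, map_smul, smul_eq_mul]; nlinarith⟩
  have hvC : ‖v‖ ≤ C := by simpa using hray_le 0 le_rfl
  have hw' : 0 < ‖w‖ := norm_pos_iff.mpr hw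
  set t := (2 * C + 1) / ‖w‖
  have ht : 0 ≤ t := div_nonneg (by linarith [norm_nonneg v]) hw'.le
  have htw : ‖t • w‖ = 2 * C + 1 := by
    rw [norm_smul, Real.norm_of_nonneg ht, div_mul_cancel₀ _ hw'.ne']
  have := norm_sub_le (v + t • w) v
  rw [add_sub_cancel_left, htw] at this
  linarith [hray_le t ht]

theorem le_div_of_sum_mul_le {ι : Type*} [Fintype ι] {a s : ι → ℝ} {c : ℝ}
    (ha : ∀ i, 0 < a i) (hs : ∀ i, 0 ≤ s i) (h : ∑ i, a i * s i ≤ c) (i : ι) :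
    s i ≤ c / a i := by
  rw [le_div_iff₀ (ha i), mul_comm]
  exact (Finset.single_le_sum (fun j _ => mul_nonneg (ha j).le (hs j)) (Finset.mem_univ i)).trans h

theorem finite_setOf_intCast_mem {ι : Type*} [Fintype ι] {T : Set (ι → ℝ)} (hT : IsBounded T) :
    {n : ι → ℤ | (fun i => (n i : ℝ)) ∈ T}.Finite := by
  obtain ⟨C, hC⟩ := isBounded_iff_forall_norm_le.mp hT
  refine (Set.Finite.pi' fun _ => Set.finite_Icc (-⌈C⌉) ⌈C⌉).subset fun n hn i => ?_
  have hi : |(n i : ℝ)| ≤ C := (norm_le_pi_norm _ i).trans (hC _ hn)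
  have : |n i| ≤ ⌈C⌉ := by exact_mod_cast hi.trans (Int.le_ceil C)
  exact abs_le.mp this

theorem finite_setOf_mulVec_intCast_mem {ι : Type*} [Fintype ι] [DecidableEq ι]
    {M : Matrix ι ι ℝ} (hM : IsUnit M) {S : Set (ι → ℝ)} (hS : IsBounded S) :
    {n : ι → ℤ | M *ᵥ (fun i => (n i : ℝ)) ∈ S}.Finite := by
  refine finite_setOf_intCast_mem (T := M.mulVec ⁻¹' S) ?_
  have hinv : IsBounded (M⁻¹.mulVec '' S) :=
    (LinearMap.toContinuousLinearMap M⁻¹.mulVecLin).lipschitz.isBounded_image hS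
  refine hinv.subset fun x hx => ⟨M *ᵥ x, hx, ?_⟩
  rw [mulVec_mulVec, nonsing_inv_mul _ ((isUnit_iff_isUnit_det M).mp hM), one_mulVec]

theorem stmt9_general (w₁ w₂ w₃ : Fin 3 → ℝ)
    (hLI : LinearIndependent ℝ ![w₁, w₂, w₃])
    (α₁ α₂ α₃ : ℝ) (hα₁ : 0 < α₁) (hα₂ : 0 < α₂) (hα₃ : 0 < α₃)
    (v : Fin 3 → ℝ) (hv : v = α₁ • w₁ + α₂ • w₂ + α₃ • w₃)
    (d : ℝ) :
    let K : Set (Fin 3 → ℝ) :=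
      {u | ∃ l₁ l₂ l₃ : ℝ, 0 ≤ l₁ ∧ 0 ≤ l₂ ∧ 0 ≤ l₃ ∧ u = l₁ • w₁ + l₂ • w₂ + l₃ • w₃}
    {nm : (Fin 3 → ℤ) × ℤ |
      Int.gcd (Int.gcd (nm.1 0) (nm.1 1)) (nm.1 2) = 1 ∧
      1 ≤ nm.2 ∧ (nm.2 : ℝ) < d ∧
      Bornology.IsBounded {u ∈ K | ∑ i, (nm.1 i : ℝ) * u i ≤ (nm.2 : ℝ)} ∧
      v ∈ {u ∈ K | ∑ i, (nm.1 i : ℝ) * u i ≤ (nm.2 : ℝ)} ∧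
      {u ∈ K | (nm.2 : ℝ) < ∑ i, (nm.1 i : ℝ) * u i}.Nonempty}.Finite := by
  intro K
  set W := ![w₁, w₂, w₃]
  set α := ![α₁, α₂, α₃]
  have hα : ∀ i, 0 < α i := by simp [α, Fin.forall_fin_succ, hα₁, hα₂, hα₃]
  have hv' : v = ∑ i, α i • W i := by simp [hv, α, W, Fin.sum_univ_three]
  have hray : ∀ i, ∀ t : ℝ, 0 ≤ t → v + t • W i ∈ K := by
    intro i t ht
    fin_cases i <;> simp only [W, Fin.zero_eta, Fin.mk_one, Fin.reduceFinMk, cons_val]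
    · exact ⟨α₁ + t, α₂, α₃, by linarith, hα₂.le, hα₃.le, by rw [hv]; module⟩
    · exact ⟨α₁, α₂ + t, α₃, hα₁.le, by linarith, hα₃.le, by rw [hv]; module⟩
    · exact ⟨α₁, α₂, α₃ + t, hα₁.le, hα₂.le, by linarith, by rw [hv]; module⟩
  refine ((finite_setOf_mulVec_intCast_mem (linearIndependent_rows_iff_isUnit.mp hLI)
    (Metric.isBounded_Icc 0 fun i => d / α i)).prod (Set.finite_Icc 1 ⌈d⌉)).subset ?_
  rintro ⟨n, m⟩ ⟨-, hm1, hmd, hbdd, hvm, -⟩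
  set φ := dotProductEquiv ℝ (Fin 3) fun i => (n i : ℝ)
  have hpos : ∀ i, 0 < φ (W i) := fun i =>
    pos_of_isBounded_sublevel φ (hLI.ne_zero i) (hray i) hbdd hvm.2
  have hsum : ∑ i, α i * φ (W i) ≤ d := by
    have : φ v ≤ m := hvm.2
    simp only [hv', map_sum, map_smul, smul_eq_mul] at this
    linarith
  have hmulVec : ∀ i, (W *ᵥ fun j => (n j : ℝ)) i = φ (W i) := fun i => dotProduct_comm _ _
  refine ⟨⟨fun i => ?_, fun i => ?_⟩, hm1, Int.le_ceil_iff.mpr (by linarith)⟩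
  · exact (hmulVec i).symm ▸ (hpos i).le
  · exact (hmulVec i).symm ▸ le_div_of_sum_mul_le hα (fun i => (hpos i).le) hsum i

theorem stmt9 (w₁ w₂ w₃ : Fin 3 → ℝ)
    (hLI : LinearIndependent ℝ ![w₁, w₂, w₃])
    (α₁ α₂ α₃ : ℝ) (hα₁ : 0 < α₁) (hα₂ : 0 < α₂) (hα₃ : 0 < α₃)
    (v : Fin 3 → ℝ) (hv : v = α₁ • w₁ + α₂ • w₂ + α₃ • w₃)
    (d : ℝ) (hd : 0 < d) :
    let K : Set (Fin 3 → ℝ) :=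
      {u | ∃ l₁ l₂ l₃ : ℝ, 0 ≤ l₁ ∧ 0 ≤ l₂ ∧ 0 ≤ l₃ ∧ u = l₁ • w₁ + l₂ • w₂ + l₃ • w₃}
    {nm : (Fin 3 → ℤ) × ℤ |
      Int.gcd (Int.gcd (nm.1 0) (nm.1 1)) (nm.1 2) = 1 ∧
      1 ≤ nm.2 ∧ (nm.2 : ℝ) < d ∧
      Bornology.IsBounded {u ∈ K | ∑ i, (nm.1 i : ℝ) * u i ≤ (nm.2 : ℝ)} ∧
      v ∈ {u ∈ K | ∑ i, (nm.1 i : ℝ) * u i ≤ (nm.2 : ℝ)} ∧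
      {u ∈ K | (nm.2 : ℝ) < ∑ i, (nm.1 i : ℝ) * u i}.Nonempty}.Finite :=
  stmt9_general w₁ w₂ w₃ hLI α₁ α₂ α₃ hα₁ hα₂ hα₃ v hv d
end

section
/- Let A be a 3×3 integer matrix whose determinant is 1 or -1, whose characteristic polynomial is irreducible over ℚ and has three real roots, and let ξ, ν₁, ν₂ ∈ ℝ³ be linearly independent eigenvectors of A (viewed as a real matrix) with pairwise distinct eigenvalues. Let K = {aξ + bν₁ + cν₂ : a, b, c ≥ 0} be the cone they span (a totally-real cubic cone). Then there exists a real number M₁ > 0 such that for every primitive vector n ∈ ℤ³ for which the set {v ∈ K : ⟨n, v⟩ ≤ 1} is bounded and the set {v ∈ K : ⟨n, v⟩ > 1} is nonempty, the Lebesgue volume of {v ∈ K : ⟨n, v⟩ ≤ 1} is strictly less than M₁. -/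
open MeasureTheory Matrix Polynomial

private lemma pow_mulVec_eig {R : Type*} [CommRing R] {B : Matrix (Fin 3) (Fin 3) R}
    {v : Fin 3 → R} {l : R} (h : B *ᵥ v = l • v) (k : ℕ) :
    (B ^ k) *ᵥ v = l ^ k • v := by
  induction k with
  | zero => simp
  | succ k ih =>
      rw [pow_succ', ← Matrix.mulVec_mulVec, ih, Matrix.mulVec_smul, h, smul_smul, pow_succ']
      rw [mul_comm]

private lemma mapMatrix_pow {R : Type*} [CommRing R] (f : ℤ →+* R)
    (A : Matrix (Fin 3) (Fin 3) ℤ) (k : ℕ) :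
    (A.map f) ^ k = (A ^ k).map f := by
  rw [← RingHom.mapMatrix_apply, ← RingHom.mapMatrix_apply]
  exact (map_pow f.mapMatrix A k).symm

private lemma detNz_ne_zero (A : Matrix (Fin 3) (Fin 3) ℤ)
    (hirr : Irreducible ((Matrix.charpoly A).map (Int.castRingHom ℚ)))
    (n : Fin 3 → ℤ) (hn : n ≠ 0) :
    (Matrix.of fun j k : Fin 3 =>
      ((fun i => ((n i : ℚ))) ᵥ* ((A.map (Int.castRingHom ℚ)) ^ (k : ℕ))) j).det ≠ 0 := by
  set B := A.map (Int.castRingHom ℚ) with hB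
  set m : Fin 3 → ℚ := fun i => ((n i : ℚ)) with hm
  intro hdet
  obtain ⟨c, hc0, hc⟩ := Matrix.exists_mulVec_eq_zero_iff.2 hdet
  set p : ℚ[X] := ∑ k : Fin 3, C (c k) * X ^ (k : ℕ) with hp
  set ch : ℚ[X] := (Matrix.charpoly A).map (Int.castRingHom ℚ) with hch
  have hchB : ch = B.charpoly := (Matrix.charpoly_map A (Int.castRingHom ℚ)).symm
  -- p ≠ 0
  have hpcoeff : ∀ k : Fin 3, p.coeff (k : ℕ) = c k := by
    intro k
    rw [hp, Fin.sum_univ_three]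
    fin_cases k <;>
      simp [coeff_add, coeff_C_mul, coeff_X_pow]
  have hpne : p ≠ 0 := by
    intro h
    apply hc0
    funext k
    rw [Pi.zero_apply, ← hpcoeff k, h, coeff_zero]
  -- degree p < degree ch
  have hdegch : ch.degree = 3 := by
    rw [hch, (Matrix.charpoly_monic A).degree_map, Matrix.charpoly_degree_eq_dim]
    simp
  have hdegp : p.degree ≤ 2 := by
    rw [hp]
    refine (Polynomial.degree_sum_le _ _).trans ?_
    refine Finset.sup_le fun k _ => (Polynomial.degree_C_mul_X_pow_le _ _).trans ?_
    exact_mod_cast Nat.cast_le.2 (Nat.lt_succ_iff.1 k.isLt)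
  have hnotdvd : ¬ ch ∣ p := by
    intro hdvd
    exact hpne (Polynomial.eq_zero_of_dvd_of_degree_lt hdvd
      (hdegp.trans_lt (by rw [hdegch]; norm_num)))
  obtain ⟨a, b, hab⟩ := (hirr.coprime_iff_not_dvd.2 hnotdvd : IsCoprime ch p)
  -- m ᵥ* aeval B p = 0
  have haevalp : m ᵥ* (aeval B p) = 0 := by
    have hev : aeval B p = ∑ k : Fin 3, c k • B ^ (k : ℕ) := by
      rw [hp, map_sum]
      refine Finset.sum_congr rfl fun k _ => ?_
      rw [_root_.map_mul, aeval_C, map_pow, aeval_X, Algebra.algebraMap_eq_smul_one,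
        smul_mul_assoc, one_mul]
    funext j
    have hcj := congrFun hc j
    simp only [Matrix.mulVec, dotProduct, Matrix.of_apply] at hcj
    rw [hev]
    have hswap : (m ᵥ* ∑ k : Fin 3, c k • B ^ (k : ℕ)) j
        = ∑ k : Fin 3, c k * (m ᵥ* B ^ (k : ℕ)) j := by
      simp only [Matrix.vecMul, dotProduct, Matrix.sum_apply, Matrix.smul_apply,
        smul_eq_mul, Finset.mul_sum]
      rw [Finset.sum_comm]
      exact Finset.sum_congr rfl fun k _ => Finset.sum_congr rfl fun i _ => by ring
    rw [Pi.zero_apply, hswap]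
    rw [Pi.zero_apply] at hcj
    rw [← hcj]
    exact Finset.sum_congr rfl fun k _ => mul_comm _ _
  -- Bezout kills m
  have hm0 : m = 0 := by
    have h1 : ch * a + p * b = 1 := by rw [mul_comm ch a, mul_comm p b]; exact hab
    have h2 : m ᵥ* (aeval B (ch * a + p * b)) = m := by
      rw [h1, _root_.map_one, Matrix.vecMul_one]
    have hch0 : aeval B ch = 0 := by rw [hchB]; exact Matrix.aeval_self_charpoly B
    rw [← h2, map_add, Matrix.vecMul_add, _root_.map_mul, _root_.map_mul,
      ← Matrix.vecMul_vecMul, ← Matrix.vecMul_vecMul]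
    simp [hch0, haevalp]
  apply hn
  funext i
  have h0 : ((n i : ℚ)) = 0 := by
    have := congrFun hm0 i
    simpa [hm] using this
  exact_mod_cast h0

set_option maxHeartbeats 1000000 in
theorem stmt10
    (A : Matrix (Fin 3) (Fin 3) ℤ)
    (hdet : A.det = 1 ∨ A.det = -1)
    (hirr : Irreducible ((Matrix.charpoly A).map (Int.castRingHom ℚ)))
    (hroots : ∃ r : Fin 3 → ℝ,
      (Matrix.charpoly A).map (Int.castRingHom ℝ) =
        ∏ i : Fin 3, (Polynomial.X - Polynomial.C (r i)))
    (ξ ν₁ ν₂ : Fin 3 → ℝ)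
    (hLI : LinearIndependent ℝ ![ξ, ν₁, ν₂])
    (l₀ l₁ l₂ : ℝ)
    (hξ : (A.map (Int.cast : ℤ → ℝ)).mulVec ξ = l₀ • ξ)
    (hν₁ : (A.map (Int.cast : ℤ → ℝ)).mulVec ν₁ = l₁ • ν₁)
    (hν₂ : (A.map (Int.cast : ℤ → ℝ)).mulVec ν₂ = l₂ • ν₂)
    (hdist : l₀ ≠ l₁ ∧ l₀ ≠ l₂ ∧ l₁ ≠ l₂) :
    let K : Set (Fin 3 → ℝ) :=
      {v | ∃ a b c : ℝ, 0 ≤ a ∧ 0 ≤ b ∧ 0 ≤ c ∧ v = a • ξ + b • ν₁ + c • ν₂}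
    ∃ M₁ : ℝ, 0 < M₁ ∧
      ∀ n : Fin 3 → ℤ,
        Int.gcd (Int.gcd (n 0) (n 1)) (n 2) = 1 →
        Bornology.IsBounded {v ∈ K | ∑ i, (n i : ℝ) * v i ≤ 1} →
        {v ∈ K | (1 : ℝ) < ∑ i, (n i : ℝ) * v i}.Nonempty →
        volume {v ∈ K | ∑ i, (n i : ℝ) * v i ≤ 1} < ENNReal.ofReal M₁ := by
  intro K
  obtain ⟨hd01, hd02, hd12⟩ := hdist
  set Aℝ : Matrix (Fin 3) (Fin 3) ℝ := A.map (Int.cast : ℤ → ℝ) with hAr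
  set vec : Fin 3 → (Fin 3 → ℝ) := ![ξ, ν₁, ν₂] with hvec
  set lv : Fin 3 → ℝ := ![l₀, l₁, l₂] with hlv
  have heig : ∀ i, Aℝ *ᵥ vec i = lv i • vec i := by
    intro i
    fin_cases i
    · simpa [hvec, hlv] using hξ
    · simpa [hvec, hlv] using hν₁
    · simpa [hvec, hlv] using hν₂
  set V : Matrix (Fin 3) (Fin 3) ℝ := Matrix.of vec with hV
  have hVdet : V.det ≠ 0 := by
    intro h
    obtain ⟨w, hw0, hw⟩ := Matrix.exists_vecMul_eq_zero_iff.2 h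
    apply hw0
    refine Fintype.linearIndependent_iff.1 hLI w ?_ |> funext
    funext j
    have := congrFun hw j
    simpa [Matrix.vecMul, dotProduct, Finset.sum_apply, hV] using this
  set vdm : ℝ := (l₁ - l₀) * (l₂ - l₀) * (l₂ - l₁) with hvdm
  have hvdm0 : vdm ≠ 0 :=
    mul_ne_zero (mul_ne_zero (sub_ne_zero.2 (Ne.symm hd01)) (sub_ne_zero.2 (Ne.symm hd02)))
      (sub_ne_zero.2 (Ne.symm hd12))
  refine ⟨|vdm| + 1, by positivity, ?_⟩
  intro n hprim hbdd _hne
  have hn0 : n ≠ 0 := by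
    intro h
    rw [h] at hprim
    simp at hprim
  set nr : Fin 3 → ℝ := fun i => ((n i : ℝ)) with hnr
  set u : Fin 3 → ℝ := fun i => nr ⬝ᵥ vec i with hu
  have hdotu : ∀ (a b c : ℝ), nr ⬝ᵥ (a • ξ + b • ν₁ + c • ν₂) = a * u 0 + b * u 1 + c * u 2 := by
    intro a b c
    simp [hu, hvec, dotProduct, Fin.sum_univ_three]
    ring
  -- positivity of u
  have hupos : ∀ i, 0 < u i := by
    intro i
    by_contra hle
    push_neg at hle
    obtain ⟨R, hR⟩ := isBounded_iff_forall_norm_le.1 hbdd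
    have hvne : vec i ≠ 0 := hLI.ne_zero i
    have hnorm : 0 < ‖vec i‖ := norm_pos_iff.2 hvne
    set t : ℝ := (|R| + 1) / ‖vec i‖ with ht
    have htpos : 0 ≤ t := by positivity
    have hmem : t • vec i ∈ {v ∈ K | ∑ j, (n j : ℝ) * v j ≤ 1} := by
      constructor
      · fin_cases i
        · exact ⟨t, 0, 0, htpos, le_refl 0, le_refl 0, by simp [hvec]⟩
        · exact ⟨0, t, 0, le_refl 0, htpos, le_refl 0, by simp [hvec]⟩
        · exact ⟨0, 0, t, le_refl 0, le_refl 0, htpos, by simp [hvec]⟩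
      · have : (∑ j, (n j : ℝ) * (t • vec i) j) = t * u i := by
          simp [hu, dotProduct, Finset.mul_sum]
          ring_nf
          exact Finset.sum_congr rfl fun j _ => by ring
        rw [this]
        exact (mul_nonpos_iff.2 (Or.inl ⟨htpos, hle⟩)).trans zero_le_one
    have := hR _ hmem
    rw [norm_smul, Real.norm_eq_abs, abs_of_nonneg htpos, ht,
      div_mul_cancel₀ _ (ne_of_gt hnorm)] at this
    have : |R| + 1 ≤ |R| := this.trans (le_abs_self R)
    linarith
  -- the key determinant identity
  set N : Matrix (Fin 3) (Fin 3) ℝ := Matrix.of fun j k : Fin 3 => (nr ᵥ* Aℝ ^ (k : ℕ)) j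
    with hN
  have hVN : V * N = Matrix.of fun i k : Fin 3 => u i * lv i ^ (k : ℕ) := by
    ext i k
    simp only [Matrix.of_apply]
    calc (V * N) i k = ∑ j, vec i j * (nr ᵥ* Aℝ ^ (k : ℕ)) j := by
          rw [Matrix.mul_apply]; rfl
      _ = (nr ᵥ* Aℝ ^ (k : ℕ)) ⬝ᵥ vec i := by
          rw [dotProduct]; exact Finset.sum_congr rfl fun j _ => mul_comm _ _
      _ = nr ⬝ᵥ ((Aℝ ^ (k : ℕ)) *ᵥ vec i) := (Matrix.dotProduct_mulVec _ _ _).symm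
      _ = nr ⬝ᵥ ((lv i ^ (k : ℕ)) • vec i) := by rw [pow_mulVec_eig (heig i)]
      _ = lv i ^ (k : ℕ) * (nr ⬝ᵥ vec i) := by rw [dotProduct_smul, smul_eq_mul]
      _ = u i * lv i ^ (k : ℕ) := mul_comm _ _
  have hdet3 : V.det * N.det = (u 0 * u 1 * u 2) * vdm := by
    rw [← Matrix.det_mul, hVN, Matrix.det_fin_three]
    simp only [Matrix.of_apply]
    norm_num [hlv, hvdm, Matrix.cons_val_two, Matrix.tail_cons, Matrix.head_cons]
    ring
  -- N has integer entries with nonzero determinant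
  set Nz : Matrix (Fin 3) (Fin 3) ℤ := Matrix.of fun j k : Fin 3 => (n ᵥ* A ^ (k : ℕ)) j
    with hNz
  have hNmap : N = Nz.map (Int.castRingHom ℝ) := by
    ext j k
    rw [hN, hNz]
    simp only [Matrix.map_apply, Matrix.of_apply]
    rw [RingHom.map_vecMul (Int.castRingHom ℝ) (A ^ (k : ℕ)) n j,
      ← mapMatrix_pow (Int.castRingHom ℝ) A (k : ℕ)]
    rfl
  have hNzdet : Nz.det ≠ 0 := by
    intro h
    have := detNz_ne_zero A hirr n hn0
    apply this
    have hmapq : (Matrix.of fun j k : Fin 3 =>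
        ((fun i => ((n i : ℚ))) ᵥ* ((A.map (Int.castRingHom ℚ)) ^ (k : ℕ))) j)
        = Nz.map (Int.castRingHom ℚ) := by
      ext j k
      rw [hNz]
      simp only [Matrix.map_apply, Matrix.of_apply]
      rw [RingHom.map_vecMul (Int.castRingHom ℚ) (A ^ (k : ℕ)) n j,
        ← mapMatrix_pow (Int.castRingHom ℚ) A (k : ℕ)]
      rfl
    rw [hmapq, ← RingHom.mapMatrix_apply, ← RingHom.map_det, h, map_zero]
  have hNdet : (1 : ℝ) ≤ |N.det| := by
    have hcast : N.det = ((Nz.det : ℤ) : ℝ) := by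
      rw [hNmap, ← RingHom.mapMatrix_apply, ← RingHom.map_det]
      rfl
    rw [hcast, ← Int.cast_abs]
    exact_mod_cast Int.one_le_abs hNzdet
  -- lower bound on u 0 * u 1 * u 2
  set P : ℝ := u 0 * u 1 * u 2 with hP
  have hPpos : 0 < P := mul_pos (mul_pos (hupos 0) (hupos 1)) (hupos 2)
  have hPbound : |V.det| / P ≤ |vdm| := by
    rw [div_le_iff₀ hPpos]
    have h1 : |V.det| * |N.det| = P * |vdm| := by
      rw [← abs_mul, hdet3, abs_mul, abs_of_pos hPpos]
    nlinarith [abs_nonneg V.det, abs_nonneg N.det, abs_pos.2 hVdet]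
  -- volume estimate
  set T : (Fin 3 → ℝ) →ₗ[ℝ] (Fin 3 → ℝ) := Matrix.toLin' Vᵀ with hT
  have hTdet : LinearMap.det T = V.det := by
    rw [hT, LinearMap.det_toLin', Matrix.det_transpose]
  set Box : Set (Fin 3 → ℝ) := Set.univ.pi fun i => Set.Icc 0 (u i)⁻¹ with hBox
  have hsub : {v ∈ K | ∑ i, (n i : ℝ) * v i ≤ 1} ⊆ T '' Box := by
    rintro v ⟨⟨a, b, c, ha, hb, hc, hv⟩, hle⟩
    have hsum : (∑ i, (n i : ℝ) * v i) = a * u 0 + b * u 1 + c * u 2 := by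
      rw [hv]; exact hdotu a b c
    rw [hsum] at hle
    have hterms : a * u 0 ≤ 1 ∧ b * u 1 ≤ 1 ∧ c * u 2 ≤ 1 := by
      refine ⟨?_, ?_, ?_⟩ <;>
        nlinarith [mul_nonneg ha (hupos 0).le, mul_nonneg hb (hupos 1).le,
          mul_nonneg hc (hupos 2).le]
    refine ⟨![a, b, c], ?_, ?_⟩
    · intro i _
      fin_cases i
      · refine Set.mem_Icc.2 ⟨ha, ?_⟩
        show a ≤ (u 0)⁻¹
        rw [← one_div, le_div_iff₀ (hupos 0)]
        exact hterms.1
      · refine Set.mem_Icc.2 ⟨hb, ?_⟩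
        show b ≤ (u 1)⁻¹
        rw [← one_div, le_div_iff₀ (hupos 1)]
        exact hterms.2.1
      · refine Set.mem_Icc.2 ⟨hc, ?_⟩
        show c ≤ (u 2)⁻¹
        rw [← one_div, le_div_iff₀ (hupos 2)]
        exact hterms.2.2
    · rw [hT]
      funext j
      rw [hv]
      simp [Matrix.toLin'_apply, Matrix.mulVec, dotProduct, Fin.sum_univ_three,
        Matrix.transpose_apply, Matrix.vecHead, Matrix.vecTail, hV, hvec]
      ring
  have hvol : volume {v ∈ K | ∑ i, (n i : ℝ) * v i ≤ 1}
      ≤ ENNReal.ofReal (|V.det| / P) := by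
    calc volume {v ∈ K | ∑ i, (n i : ℝ) * v i ≤ 1}
        ≤ volume (T '' Box) := measure_mono hsub
      _ = ENNReal.ofReal |LinearMap.det T| * volume Box :=
          Measure.addHaar_image_linearMap volume T Box
      _ = ENNReal.ofReal (|V.det| / P) := by
          rw [hTdet, hBox, volume_pi_pi]
          simp only [Real.volume_Icc, sub_zero]
          rw [Fin.prod_univ_three, ← ENNReal.ofReal_mul (inv_nonneg.2 (hupos 0).le),
            ← ENNReal.ofReal_mul (mul_nonneg (inv_nonneg.2 (hupos 0).le)
              (inv_nonneg.2 (hupos 1).le)),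
            ← ENNReal.ofReal_mul (abs_nonneg _)]
          congr 1
          rw [hP]
          field_simp
  calc volume {v ∈ K | ∑ i, (n i : ℝ) * v i ≤ 1}
      ≤ ENNReal.ofReal (|V.det| / P) := hvol
    _ ≤ ENNReal.ofReal |vdm| := ENNReal.ofReal_le_ofReal hPbound
    _ < ENNReal.ofReal (|vdm| + 1) := by
        rw [ENNReal.ofReal_lt_ofReal_iff (by positivity)]
        linarith
end

section
/- Let λ > 0 and b, c ∈ ℝ. Set P₁ = (1, λ, 1), P₂ = (1, −λ, 1), P₃ = (0,0,1) and Q(t) = (t−c, b·t, 0) in ℝ³, and let S(t) := ‖N₁(t) × N₂(t)‖² / (‖N₁(t)‖²·‖N₂(t)‖²), where N₁(t) = (P₁−Q(t)) × (P₃−Q(t)) and N₂(t) = (P₂−Q(t)) × (P₃−Q(t)). Define f(t) = (b²−λ²)t² + 2cλ²t + 1 − λ² − c²λ² and g(t) = (b⁴−b²λ²+b²−λ²)t³ + (−3b²c+3cλ²)t² + (b²c²λ²+2b²c²+b²λ²−3c²λ²+b²−λ²−1)t + c³λ²+cλ²+c. Then S is differentiable at every t ∈ ℝ, and for every t ∈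 ℝ the sign of the derivative S′(t) equals minus the sign of f(t)·g(t). -/
noncomputable section

/-- Squared sine of the angle between the plane through `Q(t), P₁, P₃` and the plane
through `Q(t), P₂, P₃`, where `P₁ = (1, l, 1)`, `P₂ = (1, -l, 1)`, `P₃ = (0,0,1)` and
`Q(t) = (t - c, b*t, 0)`. -/
def Scurve (l b c : ℝ) (t : ℝ) : ℝ :=
  let P₁ : Fin 3 → ℝ := ![1, l, 1]
  let P₂ : Fin 3 → ℝ := ![1, -l, 1]
  let P₃ : Fin 3 → ℝ := ![0, 0, 1]
  let Q : Fin 3 → ℝ := ![t - c, b * t, 0]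
  let N₁ := cross3 (P₁ - Q) (P₃ - Q)
  let N₂ := cross3 (P₂ - Q) (P₃ - Q)
  normSq3 (cross3 N₁ N₂) / (normSq3 N₁ * normSq3 N₂)

private lemma hd2 (a2 a1 a0 x : ℝ) :
    HasDerivAt (fun t : ℝ => a2 * t ^ 2 + a1 * t + a0) (2 * a2 * x + a1) x := by
  have h := (((hasDerivAt_pow 2 x).const_mul a2).add
    (((hasDerivAt_id x).const_mul a1).add (hasDerivAt_const x a0)))
  convert h using 1
  · rfl
  · rfl
  · funext s; simp [id]; ring
  · push_cast; ring

private lemma sign_negmul_div (k p y : ℝ) (hk : 0 < k) (hp : 0 < p) :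
    Real.sign (-(k * y) / p) = -Real.sign y := by
  rcases lt_trichotomy y 0 with h | h | h
  · have h1 : 0 < -(k * y) / p := div_pos (by nlinarith) hp
    rw [Real.sign_of_neg h, Real.sign_of_pos h1]
    ring
  · simp [h]
  · have h1 : -(k * y) / p < 0 := by
      apply div_neg_of_neg_of_pos _ hp
      nlinarith
    rw [Real.sign_of_neg h1, Real.sign_of_pos h]

theorem stmt12 (l b c : ℝ) (hl : 0 < l) (t : ℝ) :
    DifferentiableAt ℝ (Scurve l b c) t ∧
    Real.sign (deriv (Scurve l b c) t) =
      - Real.sign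
        (((b ^ 2 - l ^ 2) * t ^ 2 + 2 * c * l ^ 2 * t + 1 - l ^ 2 - c ^ 2 * l ^ 2) *
          ((b ^ 4 - b ^ 2 * l ^ 2 + b ^ 2 - l ^ 2) * t ^ 3 +
            (-3 * b ^ 2 * c + 3 * c * l ^ 2) * t ^ 2 +
            (b ^ 2 * c ^ 2 * l ^ 2 + 2 * b ^ 2 * c ^ 2 + b ^ 2 * l ^ 2 - 3 * c ^ 2 * l ^ 2 +
              b ^ 2 - l ^ 2 - 1) * t +
            c ^ 3 * l ^ 2 + c * l ^ 2 + c)) := by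
  -- numerator and the two denominator factors of S, as quadratics in t
  set nm : ℝ → ℝ := fun t => (4 * l ^ 2 + 4 * l ^ 2 * b ^ 2) * t ^ 2 +
    (-8 * l ^ 2 * c) * t + (4 * l ^ 2 + 4 * l ^ 2 * c ^ 2) with hnm_def
  set d1 : ℝ → ℝ := fun t => (b - l) ^ 2 * t ^ 2 + (2 * l * c * (b - l)) * t +
    (1 + l ^ 2 + l ^ 2 * c ^ 2) with hd1_def
  set d2 : ℝ → ℝ := fun t => (b + l) ^ 2 * t ^ 2 + (-(2 * l * c * (b + l))) * t +
    (1 + l ^ 2 + l ^ 2 * c ^ 2) with hd2_def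
  have hd1pos : ∀ s : ℝ, 0 < d1 s := by
    intro s
    have : d1 s = ((b - l) * s + l * c) ^ 2 + 1 + l ^ 2 := by simp only [hd1_def]; ring
    rw [this]; positivity
  have hd2pos : ∀ s : ℝ, 0 < d2 s := by
    intro s
    have : d2 s = ((b + l) * s - l * c) ^ 2 + 1 + l ^ 2 := by simp only [hd2_def]; ring
    rw [this]; positivity
  have hS : Scurve l b c = fun s => nm s / (d1 s * d2 s) := by
    funext s
    simp only [Scurve, cross3, normSq3, Pi.sub_apply, hnm_def, hd1_def, hd2_def,
      Matrix.cons_val_zero, Matrix.cons_val_one, Matrix.head_cons,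
      Matrix.cons_val_two, Matrix.tail_cons]
    congr 1 <;> ring
  -- derivatives
  have hnm : HasDerivAt nm (2 * (4 * l ^ 2 + 4 * l ^ 2 * b ^ 2) * t + (-8 * l ^ 2 * c)) t :=
    hd2 _ _ _ t
  have hD1 : HasDerivAt d1 (2 * ((b - l) ^ 2) * t + 2 * l * c * (b - l)) t := hd2 _ _ _ t
  have hD2 : HasDerivAt d2 (2 * ((b + l) ^ 2) * t + -(2 * l * c * (b + l))) t := hd2 _ _ _ t
  have hden : HasDerivAt (fun s => d1 s * d2 s)
      ((2 * ((b - l) ^ 2) * t + 2 * l * c * (b - l)) * d2 t +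
        d1 t * (2 * ((b + l) ^ 2) * t + -(2 * l * c * (b + l)))) t := hD1.mul hD2
  have hdenne : d1 t * d2 t ≠ 0 := (mul_pos (hd1pos t) (hd2pos t)).ne'
  have hSd : HasDerivAt (Scurve l b c)
      (((2 * (4 * l ^ 2 + 4 * l ^ 2 * b ^ 2) * t + (-8 * l ^ 2 * c)) * (d1 t * d2 t) -
        nm t * ((2 * ((b - l) ^ 2) * t + 2 * l * c * (b - l)) * d2 t +
          d1 t * (2 * ((b + l) ^ 2) * t + -(2 * l * c * (b + l))))) / (d1 t * d2 t) ^ 2) t := by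
    rw [hS]
    exact hnm.div hden hdenne
  refine ⟨hSd.differentiableAt, ?_⟩
  rw [hSd.deriv]
  have key : (2 * (4 * l ^ 2 + 4 * l ^ 2 * b ^ 2) * t + (-8 * l ^ 2 * c)) * (d1 t * d2 t) -
      nm t * ((2 * ((b - l) ^ 2) * t + 2 * l * c * (b - l)) * d2 t +
        d1 t * (2 * ((b + l) ^ 2) * t + -(2 * l * c * (b + l)))) =
      -((8 * l ^ 2) *
        (((b ^ 2 - l ^ 2) * t ^ 2 + 2 * c * l ^ 2 * t + 1 - l ^ 2 - c ^ 2 * l ^ 2) *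
          ((b ^ 4 - b ^ 2 * l ^ 2 + b ^ 2 - l ^ 2) * t ^ 3 +
            (-3 * b ^ 2 * c + 3 * c * l ^ 2) * t ^ 2 +
            (b ^ 2 * c ^ 2 * l ^ 2 + 2 * b ^ 2 * c ^ 2 + b ^ 2 * l ^ 2 - 3 * c ^ 2 * l ^ 2 +
              b ^ 2 - l ^ 2 - 1) * t +
            c ^ 3 * l ^ 2 + c * l ^ 2 + c))) := by
    simp only [hnm_def, hd1_def, hd2_def]
    ring
  rw [key]
  exact sign_negmul_div _ _ _ (by positivity) (by positivity)
end
end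

section
/- Let λ, b ∈ ℝ with 0 < λ ≤ 1 and b ≥ 1. Set P₁ = (1, λ, 1), P₂ = (1, −λ, 1), P₃ = (0,0,1) and Q(t) = (t, b·t, 0) in ℝ³, and let S(t) := ‖N₁(t) × N₂(t)‖² / (‖N₁(t)‖²·‖N₂(t)‖²), where N₁(t) = (P₁−Q(t)) × (P₃−Q(t)) and N₂(t) = (P₂−Q(t)) × (P₃−Q(t)). Then for every t ≥ 0 the derivative of S at t is at most 0; moreover, if it is not the case that b = 1 and λ = 1, then the derivative of S at t is strictly negative for every t > 0, while if b = 1 and λ = 1 the derivative of S is identically zero. -/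
noncomputable section

lemma Scurve_eq (l b t : ℝ) :
    Scurve l b 0 t = 4*l^2*((1+b^2)*t^2+1) /
      ((l^2+1+(l-b)^2*t^2) * (l^2+1+(l+b)^2*t^2)) := by
  simp only [Scurve, cross3, normSq3, Pi.sub_apply, Matrix.cons_val_zero, Matrix.cons_val_one,
    Matrix.head_cons, Matrix.cons_val_two, Matrix.tail_cons]
  congr 1 <;> ring

lemma Scurve_hasDerivAt (l b : ℝ) (hl : 0 < l) (t : ℝ) :
    HasDerivAt (Scurve l b 0)
      ((8*l^2*t) * ((l^2+1)*(1-b^2)*(1-l^2) - 2*((l-b)*(l+b))^2*t^2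
          - (1+b^2)*((l-b)*(l+b))^2*t^4)
        / ((l^2+1+(l-b)^2*t^2) * (l^2+1+(l+b)^2*t^2))^2) t := by
  have hfun : Scurve l b 0 = fun t : ℝ => 4*l^2*((1+b^2)*t^2+1) /
      ((l^2+1+(l-b)^2*t^2) * (l^2+1+(l+b)^2*t^2)) := funext (Scurve_eq l b)
  rw [hfun]
  have hsq : HasDerivAt (fun t : ℝ => t^2) (2*t) t := by
    simpa using hasDerivAt_pow 2 t
  have hnum : HasDerivAt (fun t : ℝ => 4*l^2*((1+b^2)*t^2+1))
      (4*l^2*((1+b^2)*(2*t))) t :=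
    ((hsq.const_mul (1+b^2)).add_const 1).const_mul (4*l^2)
  have hd1 : HasDerivAt (fun t : ℝ => l^2+1+(l-b)^2*t^2) ((l-b)^2*(2*t)) t :=
    (hsq.const_mul ((l-b)^2)).const_add (l^2+1)
  have hd2 : HasDerivAt (fun t : ℝ => l^2+1+(l+b)^2*t^2) ((l+b)^2*(2*t)) t :=
    (hsq.const_mul ((l+b)^2)).const_add (l^2+1)
  have hden := hd1.mul hd2
  have hdpos : 0 < (l^2+1+(l-b)^2*t^2) * (l^2+1+(l+b)^2*t^2) := by positivity
  have := hnum.div hden (ne_of_gt hdpos)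
  refine this.congr_deriv ?_
  simp only [Pi.mul_apply]
  ring

theorem stmt14 (l b : ℝ) (hl : 0 < l) (hl1 : l ≤ 1) (hb : 1 ≤ b) :
    (∀ t : ℝ, 0 ≤ t → deriv (Scurve l b 0) t ≤ 0) ∧
    (¬(b = 1 ∧ l = 1) → ∀ t : ℝ, 0 < t → deriv (Scurve l b 0) t < 0) ∧
    ((b = 1 ∧ l = 1) → ∀ t : ℝ, deriv (Scurve l b 0) t = 0) := by
  have hderiv : ∀ t : ℝ, deriv (Scurve l b 0) t =
      (8*l^2*t) * ((l^2+1)*(1-b^2)*(1-l^2) - 2*((l-b)*(l+b))^2*t^2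
          - (1+b^2)*((l-b)*(l+b))^2*t^4)
        / ((l^2+1+(l-b)^2*t^2) * (l^2+1+(l+b)^2*t^2))^2 :=
    fun t => (Scurve_hasDerivAt l b hl t).deriv
  have hb2 : 1 - b^2 ≤ 0 := by nlinarith
  have hl2 : 0 ≤ 1 - l^2 := by nlinarith
  have h3 : (l^2+1)*(1-b^2)*(1-l^2) ≤ 0 :=
    mul_nonpos_of_nonpos_of_nonneg (mul_nonpos_of_nonneg_of_nonpos (by positivity) hb2) hl2
  refine ⟨fun t ht => ?_, fun hne t ht => ?_, fun ⟨hb1, hl1'⟩ t => ?_⟩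
  · rw [hderiv t]
    apply div_nonpos_of_nonpos_of_nonneg _ (by positivity)
    have h5 : 0 ≤ 2*((l-b)*(l+b))^2*t^2 := by positivity
    have h6 : 0 ≤ (1+b^2)*((l-b)*(l+b))^2*t^4 := by positivity
    have hE : (l^2+1)*(1-b^2)*(1-l^2) - 2*((l-b)*(l+b))^2*t^2
        - (1+b^2)*((l-b)*(l+b))^2*t^4 ≤ 0 := by linarith
    exact mul_nonpos_of_nonneg_of_nonpos (by positivity) hE
  · rw [hderiv t]
    apply div_neg_of_neg_of_pos _ (by positivity)
    have hlb : l ≠ b := by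
      rintro rfl
      exact hne ⟨le_antisymm hl1 hb, le_antisymm hl1 hb⟩
    have hpq : 0 < ((l-b)*(l+b))^2 := by
      have h1 : l - b ≠ 0 := sub_ne_zero.mpr hlb
      have h2 : 0 < l + b := by linarith
      positivity
    have h5 : 0 < 2*((l-b)*(l+b))^2*t^2 := by positivity
    have h6 : 0 ≤ (1+b^2)*((l-b)*(l+b))^2*t^4 := by positivity
    have hE : (l^2+1)*(1-b^2)*(1-l^2) - 2*((l-b)*(l+b))^2*t^2
        - (1+b^2)*((l-b)*(l+b))^2*t^4 < 0 := by linarith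
    exact mul_neg_of_pos_of_neg (by positivity) hE
  · subst hb1 hl1'
    rw [hderiv t]
    norm_num
end
end

section
/- Let λ, c ∈ ℝ with 0 < λ < 1 and c ≥ 0. Set P₁ = (1, λ, 1), P₂ = (1, −λ, 1), P₃ = (0,0,1) and Q(t) = (c, t, 0) in ℝ³ (the vertical case), and let S(t) := ‖N₁(t) × N₂(t)‖² / (‖N₁(t)‖²·‖N₂(t)‖²), where N₁(t) = (P₁−Q(t)) × (P₃−Q(t)) and N₂(t) = (P₂−Q(t)) × (P₃−Q(t)). Then S is strictly increasing on the interval (−∞, −λc]: for all t₁ < t₂ ≤ −λc one has S(t₁) < S(t₂). -/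
/-!
After computing the cross products, `S(t) = 4 λ² g(t²)` with
`g(u) = (M + u) / ((a + u)² - 4βu)`, `M = c² + 1`, `β = (λc)²`, `a = λ² + 1 + β`.
On `[β, ∞)` the function `g` is strictly decreasing: cross-multiplying, `g v < g u` for `β ≤ u < v`
reduces to `a² - β² < 2M(a - β)` plus the monotone terms `M(u + v - 2β) + uv - β²`, and here
`2M(a - β) - (a² - β²) = (λ² + 1)(1 - λ²)(1 + 2c²) > 0`. Finally `t₁ < t₂ ≤ -λc ≤ 0` gives
`β ≤ t₂² < t₁²`.
-/

noncomputable section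

/-- Squared sine of the angle between the plane through `Q(t), P₁, P₃` and the plane
through `Q(t), P₂, P₃`, where `P₁ = (1, l, 1)`, `P₂ = (1, -l, 1)`, `P₃ = (0,0,1)` and
`Q(t) = (c, t, 0)` (the vertical case). -/
def SvertCurve (l c : ℝ) (t : ℝ) : ℝ :=
  let P₁ : Fin 3 → ℝ := ![1, l, 1]
  let P₂ : Fin 3 → ℝ := ![1, -l, 1]
  let P₃ : Fin 3 → ℝ := ![0, 0, 1]
  let Q : Fin 3 → ℝ := ![c, t, 0]
  let N₁ := cross3 (P₁ - Q) (P₃ - Q)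
  let N₂ := cross3 (P₂ - Q) (P₃ - Q)
  normSq3 (cross3 N₁ N₂) / (normSq3 N₁ * normSq3 N₂)

lemma SvertCurve_eq_sq (l c t : ℝ) :
    SvertCurve l c t = 4 * l ^ 2 *
      ((c ^ 2 + 1 + t ^ 2) / ((l ^ 2 + 1 + (l * c) ^ 2 + t ^ 2) ^ 2 - 4 * (l * c) ^ 2 * t ^ 2)) := by
  simp only [SvertCurve, cross3, normSq3, Pi.sub_apply, Matrix.cons_val_zero,
    Matrix.cons_val_one, Matrix.head_cons, Matrix.cons_val_two, Matrix.tail_cons]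
  rw [mul_div_assoc']
  congr 1 <;> ring

lemma strictAntiOn_div_sq_sub {M a β : ℝ} (hβ : 0 ≤ β) (hβa : β < a)
    (hkey : a ^ 2 - β ^ 2 < 2 * M * (a - β)) :
    StrictAntiOn (fun u => (M + u) / ((a + u) ^ 2 - 4 * β * u)) (Set.Ici β) := by
  have hD : ∀ u, 0 ≤ u → 0 < (a + u) ^ 2 - 4 * β * u := fun u hu => by
    rcases hu.eq_or_lt with rfl | hu
    · nlinarith
    · nlinarith [sq_nonneg (a - u), mul_pos hu (sub_pos.2 hβa)]
  have hM : 0 < M := by nlinarith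
  intro u (hu : β ≤ u) v (hv : β ≤ v) huv
  rw [div_lt_div_iff₀ (hD v (hβ.trans hv)) (hD u (hβ.trans hu))]
  have hmono : β ^ 2 ≤ u * v := by nlinarith
  -- the difference of the two sides is `(v - u) * (2aM - a² - 4βM + M(u + v) + uv)`
  nlinarith [mul_pos (sub_pos.2 huv) (sub_pos.2 hkey), mul_nonneg hM.le (sub_nonneg.2 hu),
    mul_nonneg hM.le (sub_nonneg.2 hv), mul_nonneg (sub_pos.2 huv).le (sub_nonneg.2 hmono)]

theorem stmt16 (l c : ℝ) (hl : 0 < l) (hl1 : l < 1) (hc : 0 ≤ c) :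
    ∀ t₁ t₂ : ℝ, t₁ < t₂ → t₂ ≤ -(l * c) →
      SvertCurve l c t₁ < SvertCurve l c t₂ := by
  intro t₁ t₂ h12 h2
  have hlc : 0 ≤ l * c := mul_nonneg hl.le hc
  have hkey : (l ^ 2 + 1 + (l * c) ^ 2) ^ 2 - ((l * c) ^ 2) ^ 2
      < 2 * (c ^ 2 + 1) * (l ^ 2 + 1 + (l * c) ^ 2 - (l * c) ^ 2) := by
    have : 0 < (l ^ 2 + 1) * (1 - l ^ 2) * (1 + 2 * c ^ 2) := by
      have : 0 < 1 - l ^ 2 := by nlinarith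
      positivity
    linarith
  have hanti := strictAntiOn_div_sq_sub (sq_nonneg (l * c)) (by nlinarith [sq_nonneg l]) hkey
  have ht₂ : (l * c) ^ 2 ≤ t₂ ^ 2 := by nlinarith
  have ht₁₂ : t₂ ^ 2 < t₁ ^ 2 := by nlinarith
  rw [SvertCurve_eq_sq, SvertCurve_eq_sq]
  exact mul_lt_mul_of_pos_left (hanti ht₂ (ht₂.trans ht₁₂.le) ht₁₂) (by positivity)
end
end

section
/- Let a, k, t, ρ be real numbers with a ≥ k + 1, k > 0, t ≥ 1 and ρ > 0. Then sinSqAngle((a + t·k − 1, t, 1), (a − 1, 0, 1), (a + ρ − 1, 0, 1)) > sinSqAngle((a + t·k, t, 1), (a, 0, 1), (a + ρ, 0, 1)). In other words, the Jacobi–Perron transformation V₁,₀;₀, which acts on coordinates by (x, y, z) ↦ (x − z, y, z), strictly increases sin²α for the state with ξ = (a + t·k, t, 1), Q₁ = (a, 0, 1) and Q₂ = (a + ρ, 0, 1). -/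
noncomputable section

/-! Since `(ξ × Q₁) × (ξ × Q₂) = det(ξ, Q₁, Q₂) • ξ`, the state `ξ = (a + tk, t, 1)`,
`Q₁ = (a, 0, 1)`, `Q₂ = (a + ρ, 0, 1)` has
`sin²α = ρ² · (|ξ|² / |(a, k, 1)|²) / (t² + (ρ - tk)² + t²(a + ρ)²)`,
and the transformation `x ↦ x - z` just replaces `a` by `a - 1`. For `a ≥ k + 1`, `k > 0`,
`t ≥ 1` this shift strictly increases the ratio `|ξ|² / |(a, k, 1)|²` and strictly decreases
the last factor of the denominator. -/

open Matrix

lemma cross_cross_cross_same_left {R : Type*} [CommRing R] (u v w : Fin 3 → R) :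
    u ⨯₃ v ⨯₃ (u ⨯₃ w) = (u ⬝ᵥ v ⨯₃ w) • u := by
  rw [cross_cross_eq_smul_sub_smul, dot_self_cross, zero_smul, zero_sub, ← neg_smul,
    ← cross_anticomm, dotProduct_neg, neg_neg,
    triple_product_permutation, triple_product_permutation]

lemma sinSqAngle_eq (u v w : Fin 3 → ℝ) :
    sinSqAngle u v w =
      (u ⬝ᵥ v ⨯₃ w) ^ 2 * normSq3 u / (normSq3 (cross3 u v) * normSq3 (cross3 u w)) := by
  rw [sinSqAngle, cross3_eq_crossProduct (cross3 u v), cross3_eq_crossProduct u v,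
    cross3_eq_crossProduct u w, cross_cross_cross_same_left, normSq3_smul]

lemma sinSqAngle_state (a k t ρ : ℝ) (ht : t ≠ 0) :
    sinSqAngle ![a + t * k, t, 1] ![a, 0, 1] ![a + ρ, 0, 1] =
      ρ ^ 2 * (((a + t * k) ^ 2 + t ^ 2 + 1) / (a ^ 2 + k ^ 2 + 1)) /
        (t ^ 2 + (ρ - t * k) ^ 2 + t ^ 2 * (a + ρ) ^ 2) := by
  rw [sinSqAngle_eq]
  simp only [normSq3, cross3, cross_apply, vec3_dotProduct, cons_val_zero, cons_val_one,
    cons_val_two, head_cons, tail_cons]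
  field_simp
  ring

lemma ratio_lt_ratio_sub_one (a k t : ℝ) (ha : k + 1 ≤ a) (hk : 0 < k) (ht : 1 ≤ t) :
    ((a + t * k) ^ 2 + t ^ 2 + 1) / (a ^ 2 + k ^ 2 + 1) <
      ((a - 1 + t * k) ^ 2 + t ^ 2 + 1) / ((a - 1) ^ 2 + k ^ 2 + 1) := by
  rw [div_lt_div_iff₀ (by positivity) (by positivity), ← sub_pos]
  have key : ((a - 1 + t * k) ^ 2 + t ^ 2 + 1) * (a ^ 2 + k ^ 2 + 1) -
      ((a + t * k) ^ 2 + t ^ 2 + 1) * ((a - 1) ^ 2 + k ^ 2 + 1) =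
      2 * t * k * (a * (a - 1) - k ^ 2 - 1) + (2 * a - 1) * (t ^ 2 + k ^ 2 * (t ^ 2 - 1)) := by
    ring
  rw [key]
  have h1 : k - 1 ≤ a * (a - 1) - k ^ 2 - 1 := by nlinarith
  have h2 : t ^ 2 ≤ t ^ 2 + k ^ 2 * (t ^ 2 - 1) := by
    nlinarith [mul_nonneg (sq_nonneg k) (by nlinarith : (0:ℝ) ≤ t ^ 2 - 1)]
  have h3 : 0 < 2 * t * k * (k - 1) + (2 * k + 1) * t ^ 2 := by
    nlinarith [mul_nonneg (mul_nonneg hk.le (by linarith : (0:ℝ) ≤ t))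
      (by linarith : (0:ℝ) ≤ t - 1)]
  linarith [mul_le_mul_of_nonneg_left h1 (by positivity : (0:ℝ) ≤ 2 * t * k),
    mul_le_mul_of_nonneg_left h2 (by linarith : (0:ℝ) ≤ 2 * a - 1),
    mul_le_mul_of_nonneg_right (by linarith : 2 * k + 1 ≤ 2 * a - 1) (sq_nonneg t)]

lemma denom_sub_one_lt (a k t ρ : ℝ) (ht : t ≠ 0) (h : 0 ≤ a - 1 + ρ) :
    t ^ 2 + (ρ - t * k) ^ 2 + t ^ 2 * (a - 1 + ρ) ^ 2 <
      t ^ 2 + (ρ - t * k) ^ 2 + t ^ 2 * (a + ρ) ^ 2 := by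
  gcongr
  linarith

theorem stmt17 (a k t ρ : ℝ) (ha : a ≥ k + 1) (hk : 0 < k) (ht : 1 ≤ t) (hρ : 0 < ρ) :
    sinSqAngle ![a + t * k - 1, t, 1] ![a - 1, 0, 1] ![a + ρ - 1, 0, 1] >
      sinSqAngle ![a + t * k, t, 1] ![a, 0, 1] ![a + ρ, 0, 1] := by
  have ht0 : t ≠ 0 := by positivity
  rw [show a + t * k - 1 = a - 1 + t * k by ring, show a + ρ - 1 = a - 1 + ρ by ring,
    sinSqAngle_state _ _ _ _ ht0, sinSqAngle_state _ _ _ _ ht0]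
  exact div_lt_div₀
    (mul_lt_mul_of_pos_left (ratio_lt_ratio_sub_one a k t ha hk ht) (by positivity))
    (denom_sub_one_lt a k t ρ ht0 (by linarith)).le (by positivity) (by positivity)
end
end
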